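/- Let k be a field with char(k) ≠ 2, V a finite-dimensional k-vector space, W = V* its dual, φ ∈ Sym²(V) ⊆ Hom(W, V) a symmetric tensor, and λ = v₁ ∧ ⋯ ∧ v_p ∈ Λ^p(V) a nonzero decomposable element spanning the subspace V_p ⊆ V. Then the Koszul-type contraction φ ∪ λ ∈ V ⊗ Λ^{p+1}(V), defined on generators by (v·w) ⊗ λ ↦ v ⊗ (w ∧ λ) + w ⊗ (v ∧ λ), vanishes if and only if the image of φ (as a map W → V) is contained in V_p. -/

import Mathlib

open TensorProduct

/-!
Contracting the first factor of `(id ⊗ g) φ` against a linear form `f` gives `g (φ f)`, and over a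
field a tensor vanishes once all these contractions do; so `(id ⊗ g) φ = 0` iff the image of `φ`
lies in `ker g`. For `g x = x ∧ λ` with `λ = v₁ ∧ ⋯ ∧ vₚ`, the wedge `x ∧ v₁ ∧ ⋯ ∧ vₚ` vanishes
exactly when `x, v₁, …, vₚ` are linearly dependent, i.e. when `x ∈ V_p`.
-/

/-- The map `V ⊗ V → Hom(V*, V)` sending `v ⊗ w` to `f ↦ f(v) • w`; on symmetric tensors this
is the identification of `Sym²(V)` with symmetric maps `V* → V`. -/
noncomputable def tensorToHom (k V : Type*) [Field k] [AddCommGroup V] [Module k V] :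
    V ⊗[k] V →ₗ[k] (Module.Dual k V →ₗ[k] V) :=
  TensorProduct.lift (LinearMap.smulRightₗ ∘ₗ Module.Dual.eval k V)

/-- The Koszul-type contraction with `λ ∈ Λ•(V)`: the map `V ⊗ V → V ⊗ Λ•(V)` sending
`v ⊗ w ↦ v ⊗ (w ∧ λ)`.  On a *symmetric* tensor `v ⊗ w + w ⊗ v` (representing `v·w ∈ Sym²V`)
it yields `v ⊗ (w ∧ λ) + w ⊗ (v ∧ λ)`, which is exactly the contraction of the paper. -/
noncomputable def cupWith (k V : Type*) [Field k] [AddCommGroup V] [Module k V]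
    (lam : ExteriorAlgebra k V) :
    V ⊗[k] V →ₗ[k] V ⊗[k] ExteriorAlgebra k V :=
  TensorProduct.map LinearMap.id ((LinearMap.mulRight k lam) ∘ₗ ExteriorAlgebra.ι k)

namespace ExteriorAlgebra

variable {k V : Type*} [Field k] [AddCommGroup V] [Module k V]

theorem ιMulti_ne_zero_of_linearIndependent {n : ℕ} {u : Fin n → V}
    (hu : LinearIndependent k u) : ιMulti k n u ≠ 0 := by
  let s : Set.powersetCard (Fin n) n := Set.powersetCard.ofCard (Finset.card_fin n)
  let e : Fin n ≃ Fin n :=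
    Equiv.ofBijective (Set.powersetCard.ofFinEmbEquiv.symm s)
      (Finite.injective_iff_bijective.mp (Set.powersetCard.ofFinEmbEquiv.symm s).injective)
  -- the only `n`-subset of `Fin n` is `univ`, so the independent family of `n`-fold products
  -- consists of `u` reordered by the permutation `e`
  have hne : ιMulti k n (u ∘ e) ≠ 0 := fun h =>
    (exteriorPower.ιMulti_family_linearIndependent_field (n := n) hu).ne_zero s (Subtype.ext h)
  rw [AlternatingMap.map_perm] at hne
  exact (smul_ne_zero_iff_ne _).mp hne

theorem ιMulti_eq_zero_iff {n : ℕ} {u : Fin n → V} :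
    ιMulti k n u = 0 ↔ ¬LinearIndependent k u :=
  ⟨fun h hu => ιMulti_ne_zero_of_linearIndependent hu h, (ιMulti k n).map_linearDependent u⟩

theorem ι_mul_ιMulti_eq_zero_iff {p : ℕ} {v : Fin p → V} (hv : LinearIndependent k v)
    (x : V) :
    ι k x * ιMulti k p v = 0 ↔ x ∈ Submodule.span k (Set.range v) := by
  have : ι k x * ιMulti k p v = ιMulti k (p + 1) (Fin.cons x v) := by
    rw [ιMulti_succ_apply, Fin.cons_zero]; rfl
  rw [this, ιMulti_eq_zero_iff, linearIndependent_finCons, not_and, not_not]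
  exact ⟨fun h => h hv, fun h _ => h⟩

end ExteriorAlgebra

namespace TensorProduct

variable {k V M : Type*} [Field k] [AddCommGroup V] [Module k V] [AddCommGroup M] [Module k M]

theorem eq_zero_of_forall_dual_rTensor_eq_zero {x : V ⊗[k] M}
    (h : ∀ f : Module.Dual k V, TensorProduct.lid k M (f.rTensor M x) = 0) : x = 0 := by
  let b := Module.Free.chooseBasis k V
  refine (equivFinsuppOfBasisLeft b).injective ?_
  ext i
  rw [equivFinsuppOfBasisLeft_apply, h, map_zero, Finsupp.zero_apply]

theorem lid_rTensor_map_id_eq_tensorToHom (g : V →ₗ[k] M) (φ : V ⊗[k] V)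
    (f : Module.Dual k V) :
    TensorProduct.lid k M (f.rTensor M (TensorProduct.map LinearMap.id g φ)) =
      g (tensorToHom k V φ f) := by
  induction φ using TensorProduct.induction_on with
  | zero => simp
  | tmul a c => simp [tensorToHom]
  | add x y hx hy => simp only [map_add, LinearMap.add_apply, hx, hy]

theorem map_id_eq_zero_iff_range_tensorToHom_le_ker (g : V →ₗ[k] M) (φ : V ⊗[k] V) :
    TensorProduct.map LinearMap.id g φ = 0 ↔
      LinearMap.range (tensorToHom k V φ) ≤ LinearMap.ker g := by
  constructor
  · rintro h _ ⟨f, rfl⟩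
    rw [LinearMap.mem_ker, ← lid_rTensor_map_id_eq_tensorToHom, h, map_zero, map_zero]
  · intro h
    refine eq_zero_of_forall_dual_rTensor_eq_zero fun f => ?_
    rw [lid_rTensor_map_id_eq_tensorToHom]
    exact h ⟨f, rfl⟩

end TensorProduct

theorem stmt_8_general {k V : Type*} [Field k] [AddCommGroup V] [Module k V]
    (p : ℕ) (v : Fin p → V) (hv : LinearIndependent k v)
    (φ : V ⊗[k] V) :
    cupWith k V ((List.ofFn fun i => ExteriorAlgebra.ι k (v i)).prod) φ = 0 ↔
      LinearMap.range (tensorToHom k V φ) ≤ Submodule.span k (Set.range v) := by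
  have hker : LinearMap.ker (LinearMap.mulRight k (ExteriorAlgebra.ιMulti k p v) ∘ₗ
      ExteriorAlgebra.ι k) = Submodule.span k (Set.range v) :=
    Submodule.ext (ExteriorAlgebra.ι_mul_ιMulti_eq_zero_iff hv)
  rw [← hker, ← TensorProduct.map_id_eq_zero_iff_range_tensorToHom_le_ker,
    ExteriorAlgebra.ιMulti_apply]
  rfl

/-- Let `k` be a field with `char k ≠ 2`, `V` finite-dimensional,
`φ ∈ Sym²(V) ⊆ V ⊗ V` a symmetric tensor (viewed as a symmetric map `V* → V` via
`tensorToHom`), and `λ = v₁ ∧ ⋯ ∧ v_p` a nonzero decomposable element of `Λ^p(V)` (the `vᵢ`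
linearly independent), spanning `V_p = span(v₁, …, v_p)`.  Then the Koszul-type contraction
`φ ∪ λ ∈ V ⊗ Λ^{p+1}(V)` vanishes if and only if the image of `φ` as a map `V* → V` is
contained in `V_p`. -/
theorem stmt_8 {k V : Type*} [Field k] [AddCommGroup V] [Module k V]
    [FiniteDimensional k V] (hchar : (2 : k) ≠ 0)
    (p : ℕ) (v : Fin p → V) (hv : LinearIndependent k v)
    (φ : V ⊗[k] V) (hφ : TensorProduct.comm k V V φ = φ) :
    cupWith k V ((List.ofFn fun i => ExteriorAlgebra.ι k (v i)).prod) φ = 0 ↔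
      LinearMap.range (tensorToHom k V φ) ≤ Submodule.span k (Set.range v) :=
  stmt_8_general p v hv φ
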